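/- Let p be a prime, let R_i (i ≥ 0) be commutative rings of characteristic p, t_i : R_i → R_{i+1} injective ring homomorphisms, and F_i : R_{i+1} → R_i bijective ring homomorphisms such that t_i ∘ F_i equals the Frobenius endomorphism x ↦ x^p of R_{i+1} (equivalently, (R_i, t_i) is a perfectoid tower arising from (R_0, (0)), i.e., a perfect tower). Fix f ∈ R_0, let f_i denote its image in R_i, and for each i let the transition map R_{i+1}/f_{i+1}R_{i+1} → R_i/f_iR_i be the ring map induced by F_i (well defined since F_i(f_{i+1}) = f_i^p). Then for every j ≥ 0 the inverse limit of the system ⋯ → R_{j+1}/f_{j+1}R_{j+1} → R_j/f_jR_j along these transition maps is isomorphic, as a ring, to the f_j-adic completion lim_n R_j/f_j^nR_j of R_j. -/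

import Mathlib

/-!
Since `t_i` is injective and `t_i ∘ F_i` is Frobenius, `F_i (f_{i+1}) = f_i ^ p`. Hence the
composite `F_j ∘ ⋯ ∘ F_{j+i-1} : R_{j+i} → R_j` is a ring isomorphism sending `f_{j+i}` to
`f_j ^ p ^ i`, so it identifies `R_{j+i}/f_{j+i}` with `R_j/f_j^{p^i}`, compatibly with the
transition maps. The inverse system `(R_j/f_j^{p^i})_i` is cofinal in `(R_j/f_j^n)_n`, hence has
the same inverse limit.
-/

universe u

noncomputable section

namespace PaperTower

/-- The inverse limit of a tower of rings `⋯ → A (i+1) → A i → ⋯ → A 0`, as a subring of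
the product. -/
def invLim (A : ℕ → Type u) [∀ i, CommRing (A i)] (g : ∀ i, A (i + 1) →+* A i) :
    Subring (∀ i, A i) where
  carrier := {a | ∀ i, g i (a (i + 1)) = a i}
  zero_mem' := by
    intro i
    show g i 0 = 0
    simp
  one_mem' := by
    intro i
    show g i 1 = 1
    simp
  add_mem' := by
    intro a b ha hb i
    show g i (a (i + 1) + b (i + 1)) = a i + b i
    rw [map_add, ha i, hb i]
  mul_mem' := by
    intro a b ha hb i
    show g i (a (i + 1) * b (i + 1)) = a i * b i
    rw [map_mul, ha i, hb i]
  neg_mem' := by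
    intro a ha i
    show g i (-(a (i + 1))) = -(a i)
    rw [map_neg, ha i]

section InverseLimit

variable {A B : ℕ → Type u} [∀ i, CommRing (A i)] [∀ i, CommRing (B i)]
  {g : ∀ i, A (i + 1) →+* A i} {g' : ∀ i, B (i + 1) →+* B i}

theorem mem_invLim {a : ∀ i, A i} : a ∈ invLim A g ↔ ∀ i, g i (a (i + 1)) = a i :=
  Iff.rfl

def invLimCongr (e : ∀ i, A i ≃+* B i) (he : ∀ i x, g' i (e (i + 1) x) = e i (g i x)) :
    invLim A g ≃+* invLim B g' where
  toFun a := ⟨fun i => e i (a.1 i), mem_invLim.2 fun i => by rw [he, mem_invLim.1 a.2 i]⟩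
  invFun b := ⟨fun i => (e i).symm (b.1 i), mem_invLim.2 fun i => (e i).injective <| by
    rw [← he, RingEquiv.apply_symm_apply, RingEquiv.apply_symm_apply, mem_invLim.1 b.2 i]⟩
  left_inv a := Subtype.ext <| funext fun i => (e i).symm_apply_apply _
  right_inv b := Subtype.ext <| funext fun i => (e i).apply_symm_apply _
  map_mul' a b := Subtype.ext <| funext fun i => map_mul (e i) _ _
  map_add' a b := Subtype.ext <| funext fun i => map_add (e i) _ _

end InverseLimit

section QuotientTower

variable {S : Type u} [CommRing S]

theorem _root_.Ideal.pow_right_anti (I : Ideal S) : Antitone (I ^ ·) :=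
  fun _ _ h => Ideal.pow_le_pow_right h

abbrev quotInvLim (J : ℕ → Ideal S) (hJ : Antitone J) : Subring (∀ n, S ⧸ J n) :=
  invLim (fun n => S ⧸ J n) (fun n => Ideal.Quotient.factor (hJ n.le_succ))

theorem factor_apply_of_mem_quotInvLim {J : ℕ → Ideal S} {hJ : Antitone J} {b : ∀ n, S ⧸ J n}
    (hb : b ∈ quotInvLim J hJ) {m n : ℕ} (hmn : m ≤ n) :
    Ideal.Quotient.factor (hJ hmn) (b n) = b m := by
  induction n, hmn using Nat.le_induction with
  | base => simp
  | succ n hmn ih =>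
    rw [← ih, ← mem_invLim.1 hb n, Ideal.Quotient.factor_comp_apply]

def quotInvLimReindex (J : ℕ → Ideal S) (hJ : Antitone J) {k : ℕ → ℕ} (hk : StrictMono k) :
    quotInvLim (J ∘ k) (hJ.comp_monotone hk.monotone) ≃+* quotInvLim J hJ where
  toFun a := ⟨fun n => Ideal.Quotient.factor (hJ hk.le_apply) (a.1 n), mem_invLim.2 fun n => by
    rw [← mem_invLim.1 a.2 n, Ideal.Quotient.factor_comp_apply, Ideal.Quotient.factor_comp_apply]⟩
  invFun b := ⟨fun i => b.1 (k i), mem_invLim.2 fun i =>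
    factor_apply_of_mem_quotInvLim b.2 (hk.monotone i.le_succ)⟩
  left_inv a := Subtype.ext <| funext fun i => factor_apply_of_mem_quotInvLim a.2 hk.le_apply
  right_inv b := Subtype.ext <| funext fun n => factor_apply_of_mem_quotInvLim b.2 hk.le_apply
  map_mul' a b := Subtype.ext <| funext fun n => map_mul (Ideal.Quotient.factor _) _ _
  map_add' a b := Subtype.ext <| funext fun n => map_add (Ideal.Quotient.factor _) _ _

end QuotientTower

section Tower

variable {R : ℕ → Type u} [∀ i, CommRing (R i)] (F : ∀ i, R (i + 1) →+* R i)

def transition (j : ℕ) : ∀ i, R (j + i) →+* R j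
  | 0 => RingHom.id _
  | i + 1 => (transition j i).comp (F (j + i))

theorem transition_bijective (hF : ∀ i, Function.Bijective (F i)) (j : ℕ) :
    ∀ i, Function.Bijective (transition F j i)
  | 0 => Function.bijective_id
  | i + 1 => (transition_bijective hF j i).comp (hF (j + i))

variable {p : ℕ} {x : ∀ i, R i}

theorem transition_apply_eq_pow (hx : ∀ i, F i (x (i + 1)) = x i ^ p) (j : ℕ) :
    ∀ i, transition F j i (x (j + i)) = x j ^ p ^ i
  | 0 => by simp [transition]
  | i + 1 => by
    change transition F j i (F (j + i) (x (j + i + 1))) = _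
    rw [hx, map_pow, transition_apply_eq_pow hx j i, ← pow_mul, ← pow_succ]

def quotientTransitionEquiv (hF : ∀ i, Function.Bijective (F i))
    (hx : ∀ i, F i (x (i + 1)) = x i ^ p) (j i : ℕ) :
    R (j + i) ⧸ Ideal.span {x (j + i)} ≃+* R j ⧸ Ideal.span {x j} ^ p ^ i :=
  Ideal.quotientEquiv _ _ (RingEquiv.ofBijective _ (transition_bijective F hF j i)) <| by
    rw [Ideal.map_span, Set.image_singleton, Ideal.span_singleton_pow, RingEquiv.coe_toRingHom,
      RingEquiv.ofBijective_apply, transition_apply_eq_pow F hx]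

def invLimQuotientSpanEquiv (hF : ∀ i, Function.Bijective (F i)) (hp : 1 ≤ p)
    (hx : ∀ i, F i (x (i + 1)) = x i ^ p)
    (G : ∀ i, (R (i + 1) ⧸ Ideal.span {x (i + 1)}) →+* (R i ⧸ Ideal.span {x i}))
    (hG : ∀ i y, G i (Ideal.Quotient.mk _ y) = Ideal.Quotient.mk _ (F i y)) (j : ℕ) :
    invLim (fun i => R (j + i) ⧸ Ideal.span {x (j + i)}) (fun i => G (j + i)) ≃+*
      quotInvLim (fun i => Ideal.span {x j} ^ p ^ i)
        ((Ideal.pow_right_anti _).comp_monotone (pow_right_monotone hp)) :=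
  invLimCongr (quotientTransitionEquiv F hF hx j) fun i y => by
    obtain ⟨y, rfl⟩ := Ideal.Quotient.mk_surjective y
    exact (congrArg (quotientTransitionEquiv F hF hx j i) (hG (j + i) y)).symm

end Tower

theorem stmt19 (p : ℕ) (hp : p.Prime)
    (R : ℕ → Type u) [∀ i, CommRing (R i)]
    (t : ∀ i, R i →+* R (i + 1))
    (htInj : ∀ i, Function.Injective (t i))
    (F : ∀ i, R (i + 1) →+* R i)
    (hFbij : ∀ i, Function.Bijective (F i))
    (hF : ∀ i (x : R (i + 1)), t i (F i x) = x ^ p)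
    (fs : ∀ i, R i)
    (hfsS : ∀ i, fs (i + 1) = t i (fs i))
    (G : ∀ i, (R (i + 1) ⧸ Ideal.span {fs (i + 1)}) →+* (R i ⧸ Ideal.span {fs i}))
    (hG : ∀ i (x : R (i + 1)),
      G i (Ideal.Quotient.mk (Ideal.span {fs (i + 1)}) x)
        = Ideal.Quotient.mk (Ideal.span {fs i}) (F i x))
    (j : ℕ) :
    Nonempty
      ((invLim (fun i => R (j + i) ⧸ Ideal.span {fs (j + i)}) (fun i => G (j + i))) ≃+*
        (invLim (fun n => R j ⧸ Ideal.span {fs j} ^ n)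
          (fun n => Ideal.Quotient.factor (S := Ideal.span {fs j} ^ (n + 1))
            (T := Ideal.span {fs j} ^ n) (Ideal.pow_le_pow_right (Nat.le_succ n))))) := by
  have hFfs : ∀ i, F i (fs (i + 1)) = fs i ^ p := fun i =>
    htInj i (by rw [hF, map_pow, ← hfsS])
  exact ⟨(invLimQuotientSpanEquiv F hFbij hp.one_le hFfs G hG j).trans
    (quotInvLimReindex (fun n => Ideal.span {fs j} ^ n) (Ideal.pow_right_anti _)
      (pow_right_strictMono₀ hp.one_lt))⟩

end PaperTower

end
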